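/- Let ε > 0 and let m : (−ε,ε) → ℝ be differentiable with m'(t) = −c(t)·H(t)·(P(t) + 2H'(t)θ(t)) where c(t) > 0, P(t) ≥ 0, θ(t) ≤ 0, H(t) > 0 on (−ε,0), H(t) < 0 on (0,ε), H'(t) ≤ 0. If m(t) ≤ m(0) for all t, then H(t)·P(t) = 0 and H(t)·H'(t)·θ(t) = 0 for all t ∈ (−ε,ε). -/

import Mathlib

/-!
Since `P ≥ 0` and `H' θ ≥ 0`, the sign of `m'` is that of `-H`: `m` decreases on `(-ε, 0]` and
increases on `[0, ε)`, so `0` is a minimum as well as a maximum. Hence `m` is constant, `m' = 0`,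
and the two nonnegative summands of `H (P + 2 H' θ) = 0` vanish separately.
-/

open Set

theorem isMinOn_Ioo_of_hasDerivAt {f f' : ℝ → ℝ} {a b c : ℝ} (hb : b ∈ Ioo a c)
    (hf : ∀ x ∈ Ioo a c, HasDerivAt f (f' x) x)
    (h₀ : ∀ x ∈ Ioo a b, f' x ≤ 0) (h₁ : ∀ x ∈ Ioo b c, 0 ≤ f' x) :
    IsMinOn f (Ioo a c) b := by
  have hleft : Ioo a b ⊆ Ioo a c := Ioo_subset_Ioo_right hb.2.le
  have hright : Ioo b c ⊆ Ioo a c := Ioo_subset_Ioo_left hb.1.le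
  refine isMinOn_Ioo_of_deriv (hf b hb).continuousAt
    (fun x hx => (hf x (hleft hx)).differentiableAt.differentiableWithinAt)
    (fun x hx => (hf x (hright hx)).differentiableAt.differentiableWithinAt)
    (fun x hx => ?_) (fun x hx => ?_)
  · rw [(hf x (hleft hx)).deriv]; exact h₀ x hx
  · rw [(hf x (hright hx)).deriv]; exact h₁ x hx

theorem IsMaxOn.hasDerivAt_eq_zero_of_isMinOn {f : ℝ → ℝ} {f' : ℝ} {s : Set ℝ} {a b : ℝ}
    (hs : IsOpen s) (hmax : IsMaxOn f s a) (hmin : IsMinOn f s a) (hb : b ∈ s)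
    (hf : HasDerivAt f f' b) : f' = 0 :=
  IsLocalMax.hasDerivAt_eq_zero (Filter.mem_of_superset (hs.mem_nhds hb)
    fun y hy => (isMaxOn_iff.1 hmax y hy).trans (isMinOn_iff.1 hmin b hb)) hf

theorem mul_eq_zero_and_mul_eq_zero_of_mul_add_eq_zero {α : Type*} [Semiring α] [PartialOrder α]
    [IsOrderedAddMonoid α] [NoZeroDivisors α] {x a b : α} (ha : 0 ≤ a) (hb : 0 ≤ b)
    (h : x * (a + b) = 0) : x * a = 0 ∧ x * b = 0 := by
  rcases mul_eq_zero.1 h with hx | hab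
  · simp [hx]
  · obtain ⟨rfl, rfl⟩ := (add_eq_zero_iff_of_nonneg ha hb).1 hab
    simp

theorem rigidity_sign_argument_general (ε : ℝ)
    (m c P θ H H' : ℝ → ℝ)
    (hm : ∀ t ∈ Set.Ioo (-ε) ε,
      HasDerivAt m (-(c t) * H t * (P t + 2 * H' t * θ t)) t)
    (hc : ∀ t ∈ Set.Ioo (-ε) ε, 0 < c t)
    (hP : ∀ t ∈ Set.Ioo (-ε) ε, 0 ≤ P t)
    (hθ : ∀ t ∈ Set.Ioo (-ε) ε, θ t ≤ 0)
    (hHneg : ∀ t ∈ Set.Ioo (-ε) (0 : ℝ), 0 < H t)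
    (hHpos : ∀ t ∈ Set.Ioo (0 : ℝ) ε, H t < 0)
    (hH' : ∀ t ∈ Set.Ioo (-ε) ε, H' t ≤ 0)
    (hmax : ∀ t ∈ Set.Ioo (-ε) ε, m t ≤ m 0) :
    ∀ t ∈ Set.Ioo (-ε) ε, H t * P t = 0 ∧ H t * H' t * θ t = 0 := by
  intro t ht
  have hθH' : ∀ x ∈ Ioo (-ε) ε, 0 ≤ 2 * H' x * θ x := fun x hx => by
    nlinarith [hH' x hx, hθ x hx]
  have hdefect : ∀ x ∈ Ioo (-ε) ε, 0 ≤ c x * (P x + 2 * H' x * θ x) := fun x hx =>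
    mul_nonneg (hc x hx).le (add_nonneg (hP x hx) (hθH' x hx))
  have h0 : (0 : ℝ) ∈ Ioo (-ε) ε := ⟨by linarith [ht.1, ht.2], by linarith [ht.1, ht.2]⟩
  have hmin : IsMinOn m (Ioo (-ε) ε) 0 := by
    refine isMinOn_Ioo_of_hasDerivAt h0 hm (fun x hx => ?_) (fun x hx => ?_)
    · nlinarith [hHneg x hx, hdefect x ⟨hx.1, hx.2.trans h0.2⟩]
    · nlinarith [hHpos x hx, hdefect x ⟨h0.1.trans hx.1, hx.2⟩]
  have hderiv := IsMaxOn.hasDerivAt_eq_zero_of_isMinOn isOpen_Ioo hmax hmin ht (hm t ht)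
  have hHdefect : H t * (P t + 2 * H' t * θ t) = 0 := by
    rw [neg_mul, neg_mul, neg_eq_zero, mul_assoc] at hderiv
    exact (mul_eq_zero.1 hderiv).resolve_left (hc t ht).ne'
  obtain ⟨hHP, hHH'θ⟩ :=
    mul_eq_zero_and_mul_eq_zero_of_mul_add_eq_zero (hP t ht) (hθH' t ht) hHdefect
  exact ⟨hHP, by linarith⟩

theorem rigidity_sign_argument (ε : ℝ) (hε : 0 < ε)
    (m c P θ H H' : ℝ → ℝ)
    (hm : ∀ t ∈ Set.Ioo (-ε) ε,
      HasDerivAt m (-(c t) * H t * (P t + 2 * H' t * θ t)) t)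
    (hc : ∀ t ∈ Set.Ioo (-ε) ε, 0 < c t)
    (hP : ∀ t ∈ Set.Ioo (-ε) ε, 0 ≤ P t)
    (hθ : ∀ t ∈ Set.Ioo (-ε) ε, θ t ≤ 0)
    (hHneg : ∀ t ∈ Set.Ioo (-ε) (0 : ℝ), 0 < H t)
    (hHpos : ∀ t ∈ Set.Ioo (0 : ℝ) ε, H t < 0)
    (hH' : ∀ t ∈ Set.Ioo (-ε) ε, H' t ≤ 0)
    (hmax : ∀ t ∈ Set.Ioo (-ε) ε, m t ≤ m 0) :
    ∀ t ∈ Set.Ioo (-ε) ε, H t * P t = 0 ∧ H t * H' t * θ t = 0 :=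
  rigidity_sign_argument_general ε m c P θ H H' hm hc hP hθ hHneg hHpos hH' hmax
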